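/- Let n ≥ 6 and let α, β be distinct positive roots of A_{n−1}. If w ∈ S_n is such that w·(−2α−2β) = w(−2α−2β+ρ) − ρ is dominant, then w·(−2α−2β) = 0. -/

import Mathlib

/-- ρ = (n−1, n−2, …, 1, 0) for type A_{n−1} realized in ℤ^n. -/
def weylRho (n : ℕ) : Fin n → ℤ := fun i => (n : ℤ) - 1 - (i : ℕ)

/-- The action of `w ∈ S_n` on weights: `w(λ)_i = λ_{w⁻¹(i)}`. -/
def wAct {n : ℕ} (w : Equiv.Perm (Fin n)) (lam : Fin n → ℤ) : Fin n → ℤ :=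
  fun i => lam (w⁻¹ i)

/-- The dot action `w·λ = w(λ+ρ) − ρ`. -/
def dotAct {n : ℕ} (w : Equiv.Perm (Fin n)) (lam : Fin n → ℤ) : Fin n → ℤ :=
  fun i => lam (w⁻¹ i) + weylRho n (w⁻¹ i) - weylRho n i

/-- `λ` is dominant iff `λ_1 ≥ λ_2 ≥ ⋯ ≥ λ_n`. -/
def IsDominant {n : ℕ} (lam : Fin n → ℤ) : Prop :=
  ∀ i j : Fin n, i ≤ j → lam j ≤ lam i

/-- The root `e_i − e_j`. -/
def posRoot {n : ℕ} (i j : Fin n) : Fin n → ℤ :=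
  fun k => (if k = i then 1 else 0) - (if k = j then 1 else 0)

/-- Positive roots of A_{n−1}: `e_i − e_j` with `i < j`. -/
def IsPosRoot {n : ℕ} (x : Fin n → ℤ) : Prop :=
  ∃ i j : Fin n, i < j ∧ x = posRoot i j

/-- Negative roots of A_{n−1}. -/
def IsNegRoot {n : ℕ} (x : Fin n → ℤ) : Prop :=
  ∃ i j : Fin n, i < j ∧ x = -(posRoot i j)

/-- The length ℓ(w): the number of positive roots sent to negative roots by `w`,
i.e. the number of inversions of `w`. -/
def weylLen {n : ℕ} (w : Equiv.Perm (Fin n)) : ℕ :=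
  (Finset.univ.filter (fun p : Fin n × Fin n => p.1 < p.2 ∧ w p.2 < w p.1)).card

/-!
Put `μ = ρ - 2α - 2β` and `ν = w·(-2α-2β)`, so that `ν + ρ = w(μ)`. If `ν` is dominant then
`ν + ρ` is strictly decreasing, hence `μ` has distinct entries. If moreover `ν ≠ 0`, then `ν` is
a nonzero dominant weight with coordinate sum `0`, so its partial sums `ν₁ + ⋯ + νₖ` (`k < n`)
are positive integers and
`‖ν + ρ‖² - ‖ρ‖² = ‖ν‖² + 2⟨ν, ρ⟩ ≥ 2 + 2(n - 1) = 2n`.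
But `‖ν + ρ‖² = ‖μ‖²`, and `‖μ‖² - ‖ρ‖² = 16 + 8⟨α, β⟩ - 4(ht α + ht β) ≤ 12` for distinct
positive roots. Hence `n = 6`, and the remaining configurations are excluded by a finite check.
-/

open Matrix Finset Function

lemma exists_pos_of_sum_eq_zero {ι : Type*} [Fintype ι] {ν : ι → ℤ}
    (hsum : ∑ i, ν i = 0) (hne : ν ≠ 0) : ∃ i, 0 < ν i := by
  by_contra! h
  exact hne (funext fun i => (sum_eq_zero_iff_of_nonpos fun i _ => h i).1 hsum i (mem_univ i))

lemma two_le_dotProduct_self_of_sum_eq_zero {ι : Type*} [Fintype ι] {ν : ι → ℤ}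
    (hsum : ∑ i, ν i = 0) (hne : ν ≠ 0) : 2 ≤ ν ⬝ᵥ ν := by
  obtain ⟨p, hp⟩ := exists_pos_of_sum_eq_zero hsum hne
  obtain ⟨q, hq⟩ := exists_pos_of_sum_eq_zero (ν := -ν) (by simp [hsum]) (neg_ne_zero.2 hne)
  simp only [Pi.neg_apply] at hq
  have hpq : p ≠ q := by
    rintro rfl
    omega
  have := add_le_sum (f := fun i => ν i * ν i) (fun i _ => mul_self_nonneg (ν i))
    (mem_univ p) (mem_univ q) hpq
  rw [dotProduct]
  nlinarith

section Weights

variable {n : ℕ}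

lemma weylRho_strictAnti : StrictAnti (weylRho n) := by
  intro i j hij
  simp only [weylRho]
  have : (i : ℕ) < j := hij
  omega

lemma dotProduct_posRoot (v : Fin n → ℤ) (i j : Fin n) :
    v ⬝ᵥ posRoot i j = v i - v j := by
  have : posRoot i j = Pi.single i 1 - Pi.single j 1 := by
    ext k
    simp [posRoot, Pi.single_apply]
  simp [this, dotProduct_sub, dotProduct_single]

lemma sum_posRoot (i j : Fin n) : ∑ k, posRoot i j k = 0 := by
  rw [← dotProduct_one, dotProduct_comm, dotProduct_posRoot, Pi.one_apply, Pi.one_apply, sub_self]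

lemma dotProduct_weylRho_eq_sum_partialSums (ν : Fin n → ℤ) :
    ν ⬝ᵥ weylRho n = ∑ k ∈ range (n - 1), ∑ i : Fin n with i.val ≤ k, ν i := by
  have hρ (i : Fin n) : weylRho n i = ∑ k ∈ range (n - 1), if (i : ℕ) ≤ k then 1 else 0 := by
    have : {k ∈ range (n - 1) | (i : ℕ) ≤ k} = Ico (i : ℕ) (n - 1) := by
      ext k
      simp [and_comm]
    rw [sum_boole, this, Nat.card_Ico, weylRho]
    have := i.isLt
    omega
  simp only [dotProduct, hρ, mul_sum, mul_ite, mul_one, mul_zero, sum_filter]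
  exact sum_comm

variable {ν : Fin n → ℤ}

lemma one_le_sum_filter_le (hanti : Antitone ν) (hsum : ∑ i, ν i = 0) (hne : ν ≠ 0)
    {k : ℕ} (hk : k + 1 < n) : 1 ≤ ∑ i : Fin n with i.val ≤ k, ν i := by
  set j : Fin n := ⟨k + 1, hk⟩
  by_cases hj : 0 ≤ ν j
  · obtain ⟨p, hp⟩ := exists_pos_of_sum_eq_zero hsum hne
    have h0 : 1 ≤ ν ⟨0, by omega⟩ := hp.trans_le (hanti (Fin.le_def.2 (Nat.zero_le _)))
    refine h0.trans (single_le_sum (fun i hi => hj.trans (hanti ?_)) (by simp))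
    simp only [mem_filter] at hi
    exact Fin.le_def.2 (by simp [j]; omega)
  · have htail : ∑ i : Fin n with ¬i.val ≤ k, -ν i ≥ -ν j :=
      single_le_sum (fun i hi => neg_nonneg.2 ((hanti ?_).trans (not_le.1 hj).le)) (by simp [j])
    · rw [sum_neg_distrib] at htail
      have := sum_filter_add_sum_filter_not univ (fun i : Fin n => (i : ℕ) ≤ k) ν
      omega
    simp only [mem_filter] at hi
    exact Fin.le_def.2 (by simp [j]; omega)

lemma sub_one_le_dotProduct_weylRho (hanti : Antitone ν) (hsum : ∑ i, ν i = 0) (hne : ν ≠ 0) :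
    (n : ℤ) - 1 ≤ ν ⬝ᵥ weylRho n := by
  obtain ⟨p, -⟩ := exists_pos_of_sum_eq_zero hsum hne
  have hn : 0 < n := p.pos
  rw [dotProduct_weylRho_eq_sum_partialSums]
  calc (n : ℤ) - 1 = ∑ _k ∈ range (n - 1), 1 := by simp; omega
    _ ≤ _ := sum_le_sum fun k hk => one_le_sum_filter_le hanti hsum hne (by simp at hk; omega)

lemma two_mul_le_dotProduct_add_weylRho (hanti : Antitone ν) (hsum : ∑ i, ν i = 0)
    (hne : ν ≠ 0) :
    2 * n ≤ (ν + weylRho n) ⬝ᵥ (ν + weylRho n) - weylRho n ⬝ᵥ weylRho n := by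
  have := two_le_dotProduct_self_of_sum_eq_zero hsum hne
  have := sub_one_le_dotProduct_weylRho hanti hsum hne
  simp only [add_dotProduct, dotProduct_add, dotProduct_comm (weylRho n) ν]
  linarith

end Weights

section DotAction

variable {n : ℕ} (w : Equiv.Perm (Fin n)) (lam : Fin n → ℤ)

lemma dotAct_add_weylRho : dotAct w lam + weylRho n = (lam + weylRho n) ∘ ⇑w⁻¹ := by
  ext i
  simp [dotAct]

lemma sum_dotAct : ∑ i, dotAct w lam i = ∑ i, lam i := by
  have := congrArg (fun v => ∑ i, v i) (dotAct_add_weylRho w lam)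
  simpa [sum_add_distrib, Equiv.sum_comp] using this

lemma dotProduct_self_dotAct_add_weylRho :
    (dotAct w lam + weylRho n) ⬝ᵥ (dotAct w lam + weylRho n) =
      (lam + weylRho n) ⬝ᵥ (lam + weylRho n) := by
  rw [dotAct_add_weylRho]
  exact Equiv.sum_comp w⁻¹ fun i => (lam + weylRho n) i * (lam + weylRho n) i

lemma injective_add_weylRho_of_isDominant_dotAct (hdom : IsDominant (dotAct w lam)) :
    Injective (lam + weylRho n) := by
  have hanti : StrictAnti (dotAct w lam + weylRho n) :=
    Antitone.add_strictAnti hdom weylRho_strictAnti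
  rw [dotAct_add_weylRho] at hanti
  simpa [comp_assoc] using hanti.injective.comp w.injective

end DotAction

section Roots

variable {n : ℕ} {a b c d : Fin n}

lemma posRoot_dotProduct_self (hab : a ≠ b) : posRoot a b ⬝ᵥ posRoot a b = 2 := by
  simp [dotProduct_posRoot, posRoot, hab, hab.symm]

lemma weylRho_dotProduct_posRoot (a b : Fin n) : weylRho n ⬝ᵥ posRoot a b = (b : ℤ) - a := by
  simp only [dotProduct_posRoot, weylRho]
  ring

lemma two_mul_posRoot_dotProduct_posRoot_add_one_le (hab : a < b) (hcd : c < d)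
    (hne : (a, b) ≠ (c, d)) :
    2 * (posRoot a b ⬝ᵥ posRoot c d) + 1 ≤ ((b : ℤ) - a) + ((d : ℤ) - c) := by
  have hab' : (a : ℕ) < b := hab
  have hcd' : (c : ℕ) < d := hcd
  simp only [dotProduct_posRoot, posRoot, Fin.ext_iff, Prod.mk.injEq, ne_eq] at hne ⊢
  split_ifs <;> omega

lemma dotProduct_self_sub_weylRho_le_twelve (hab : a < b) (hcd : c < d) (hne : (a, b) ≠ (c, d)) :
    (-(2 • posRoot a b) - 2 • posRoot c d + weylRho n) ⬝ᵥ
      (-(2 • posRoot a b) - 2 • posRoot c d + weylRho n) - weylRho n ⬝ᵥ weylRho n ≤ 12 := by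
  have := two_mul_posRoot_dotProduct_posRoot_add_one_le hab hcd hne
  simp only [two_nsmul, add_dotProduct, dotProduct_add, sub_dotProduct, dotProduct_sub,
    neg_dotProduct, dotProduct_neg, posRoot_dotProduct_self hab.ne,
    posRoot_dotProduct_self hcd.ne, dotProduct_comm (posRoot c d) (posRoot a b),
    dotProduct_comm (posRoot _ _) (weylRho n), weylRho_dotProduct_posRoot]
  linarith

-- For `n = 6` the bound `12` is attained only when `α` and `β` share an endpoint and have heights
-- `1` and `2`; in each such case `ρ - 2α - 2β` has a repeated entry.
lemma dotProduct_self_sub_weylRho_lt_twelve_of_injective :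
    ∀ a b c d : Fin 6, a < b → c < d → (a, b) ≠ (c, d) →
      Injective (-(2 • posRoot a b) - 2 • posRoot c d + weylRho 6) →
      (-(2 • posRoot a b) - 2 • posRoot c d + weylRho 6) ⬝ᵥ
        (-(2 • posRoot a b) - 2 • posRoot c d + weylRho 6) - weylRho 6 ⬝ᵥ weylRho 6 < 12 := by
  decide

end Roots

/-- For n ≥ 6 and distinct positive roots α, β of A_{n−1},
if w·(−2α−2β) is dominant then it is zero. -/
theorem dot_neg_2a_2b_dominant_eq_zero (n : ℕ) (hn : 6 ≤ n) (α β : Fin n → ℤ)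
    (hα : IsPosRoot α) (hβ : IsPosRoot β) (hne : α ≠ β) (w : Equiv.Perm (Fin n))
    (hdom : IsDominant (dotAct w (-(2 • α) - 2 • β))) :
    dotAct w (-(2 • α) - 2 • β) = 0 := by
  obtain ⟨a, b, hab, rfl⟩ := hα
  obtain ⟨c, d, hcd, rfl⟩ := hβ
  have hpair : (a, b) ≠ (c, d) := by
    rintro ⟨⟩
    exact hne rfl
  have hsum : ∑ i, (-(2 • posRoot a b) - 2 • posRoot c d) i = 0 := by
    simp [sum_sub_distrib, ← mul_sum, sum_posRoot]
  have hreg := injective_add_weylRho_of_isDominant_dotAct w _ hdom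
  by_contra hν
  have hlower := two_mul_le_dotProduct_add_weylRho hdom (by rwa [sum_dotAct]) hν
  rw [dotProduct_self_dotAct_add_weylRho] at hlower
  have hupper := dotProduct_self_sub_weylRho_le_twelve hab hcd hpair
  obtain rfl : n = 6 := by omega
  exact (dotProduct_self_sub_weylRho_lt_twelve_of_injective a b c d hab hcd hpair hreg).not_ge
    hlower
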